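/- arXiv:2002.07079 — 2 statements merged into one kernel-verified Lean document; each statement's English description precedes it below -/
import Mathlib

section
/- Given injective functions f : X → Y and g : Y → X, if x : X is not a g-point and x' : X is a g-point, then g (f x) ≠ x'. Consequently, the image under f of the non-g-points and the image under g⁻¹ of the g-points are disjoint in Y. -/
/-- `x : X` is a *g-point* if for every `x₀ : X` and `n : ℕ` with `(g ∘ f)^[n] x₀ = x`,
the `g`-fiber of `x₀` is inhabited. -/
def IsGPoint {X Y : Type*} (f : X → Y) (g : Y → X) (x : X) : Prop :=
  ∀ (x₀ : X) (n : ℕ), (g ∘ f)^[n] x₀ = x → ∃ y : Y, g y = x₀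

theorem images_disjoint {X Y : Type*} (f : X → Y) (g : Y → X)
    (hf : Function.Injective f) (hg : Function.Injective g) :
    (∀ x x' : X, ¬ IsGPoint f g x → IsGPoint f g x' → g (f x) ≠ x') ∧
    Disjoint (f '' {x : X | ¬ IsGPoint f g x}) {y : Y | IsGPoint f g (g y)} := by
  have key : ∀ x x' : X, ¬ IsGPoint f g x → IsGPoint f g x' → g (f x) ≠ x' := by
    intro x x' hx hx' heq
    apply hx
    intro x₀ n hn
    exact hx' x₀ (n + 1) (by
      rw [Function.iterate_succ_apply', hn]; simpa using heq)
  refine ⟨key, Set.disjoint_left.mpr ?_⟩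
  rintro y ⟨x, hx, rfl⟩ hy
  exact key x (g (f x)) hx hy rfl
end

section
/- Given injective functions f : X → Y and g : Y → X, if y : Y is such that g y is not a g-point, then there exists x : X with f x = y such that x is not a g-point. -/
theorem exists_fiber_not_gPoint {X Y : Type*} (f : X → Y) (g : Y → X)
    (hf : Function.Injective f) (hg : Function.Injective g) (y : Y)
    (hy : ¬ IsGPoint f g (g y)) :
    ∃ x : X, f x = y ∧ ¬ IsGPoint f g x := by
  simp only [IsGPoint, not_forall] at hy
  obtain ⟨x₀, n, hn, hfib⟩ := hy
  cases n with
  | zero => exact absurd ⟨y, hn.symm⟩ hfib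
  | succ m =>
    rw [Function.iterate_succ_apply'] at hn
    refine ⟨(g ∘ f)^[m] x₀, hg hn, fun h => hfib (h x₀ m rfl)⟩
end
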